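/- arXiv:2407.14635 — 6 statements merged into one kernel-verified Lean document; each statement's English description precedes it below -/
import Mathlib

section
/- Makarov lower bound: for any two real-valued random variables Y1, Y0 on a common probability space and any t ∈ ℝ, P(Y1 - Y0 ≤ 0) ≥ P(Y1 ≤ t) - P(Y0 ≤ t). Consequently P(Y1 - Y0 ≤ 0) ≥ sup_t (F1(t) - F0(t)) where Fj(t) = P(Yj ≤ t). -/
open MeasureTheory

theorem makarov_lower_bound
    {Ω : Type*} [MeasurableSpace Ω] (P : Measure Ω) [IsProbabilityMeasure P]
    (Y1 Y0 : Ω → ℝ) (hY1 : Measurable Y1) (hY0 : Measurable Y0) :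
    (∀ t : ℝ,
      (P {ω | Y1 ω ≤ t}).toReal - (P {ω | Y0 ω ≤ t}).toReal
        ≤ (P {ω | Y1 ω - Y0 ω ≤ 0}).toReal) ∧
    (⨆ t : ℝ, ((P {ω | Y1 ω ≤ t}).toReal - (P {ω | Y0 ω ≤ t}).toReal))
        ≤ (P {ω | Y1 ω - Y0 ω ≤ 0}).toReal := by
  have key : ∀ t : ℝ,
      (P {ω | Y1 ω ≤ t}).toReal - (P {ω | Y0 ω ≤ t}).toReal
        ≤ (P {ω | Y1 ω - Y0 ω ≤ 0}).toReal := by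
    intro t
    have hsub : {ω | Y1 ω ≤ t} ⊆ {ω | Y0 ω ≤ t} ∪ {ω | Y1 ω - Y0 ω ≤ 0} := by
      intro ω hω
      by_cases h : Y0 ω ≤ t
      · exact Or.inl h
      · exact Or.inr (by simp only [Set.mem_setOf_eq]; have h1 : Y1 ω ≤ t := hω; linarith [not_le.mp h])
    have hm : P {ω | Y1 ω ≤ t} ≤ P {ω | Y0 ω ≤ t} + P {ω | Y1 ω - Y0 ω ≤ 0} :=
      le_trans (measure_mono hsub) (measure_union_le _ _)
    have h1 := measure_lt_top P {ω | Y1 ω ≤ t}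
    have h2 := measure_lt_top P {ω | Y0 ω ≤ t}
    have h3 := measure_lt_top P {ω | Y1 ω - Y0 ω ≤ 0}
    have := ENNReal.toReal_mono (by finiteness) hm
    rw [ENNReal.toReal_add h2.ne h3.ne] at this
    linarith
  exact ⟨key, ciSup_le key⟩
end

section
/- Makarov upper bound: for any two real-valued random variables Y1, Y0 on a common probability space and any t ∈ ℝ, P(Y1 - Y0 ≤ 0) ≤ 1 + P(Y1 ≤ t) - P(Y0 < t). In particular P(Y1 - Y0 ≤ 0) ≤ 1 + inf_t (F1(t) - F0(t)) when F0 is continuous. -/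
open MeasureTheory Set Filter Topology

/-!
A Fréchet–Bonferroni bound: for `A = {Y₁ ≤ Y₀}` and `S = {Y₀ < t}` we have `A ∩ S ⊆ {Y₁ ≤ t}`,
so `P(A) + P(S) = P(A ∪ S) + P(A ∩ S) ≤ 1 + P(Y₁ ≤ t)`. When `F₀` is continuous,
`P(Y₀ < t) = F₀(t)`, and taking the infimum over `t` gives the second bound.
-/

section Bonferroni

variable {α : Type*} [MeasurableSpace α] {μ : Measure α} {s t u : Set α}

theorem measure_add_measure_le_measure_univ_add (ht : NullMeasurableSet t μ) (h : s ∩ t ⊆ u) :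
    μ s + μ t ≤ μ univ + μ u := by
  rw [← measure_union_add_inter₀ s ht]
  gcongr
  exact subset_univ _

theorem toReal_measure_add_le_one_add [IsProbabilityMeasure μ] (ht : NullMeasurableSet t μ)
    (h : s ∩ t ⊆ u) : (μ s).toReal + (μ t).toReal ≤ 1 + (μ u).toReal := by
  have hle := measure_add_measure_le_measure_univ_add ht h
  rw [measure_univ] at hle
  rw [← ENNReal.toReal_add (by finiteness) (by finiteness), ← ENNReal.toReal_one,
    ← ENNReal.toReal_add ENNReal.one_ne_top (by finiteness)]
  exact ENNReal.toReal_mono (by finiteness) hle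

end Bonferroni

theorem toReal_measure_le_le_toReal_measure_lt_of_continuous {α : Type*} [MeasurableSpace α]
    {μ : Measure α} [IsFiniteMeasure μ] {f : α → ℝ}
    (hcont : Continuous fun t : ℝ => (μ {x | f x ≤ t}).toReal) (t : ℝ) :
    (μ {x | f x ≤ t}).toReal ≤ (μ {x | f x < t}).toReal := by
  refine le_of_tendsto ((hcont.tendsto t).mono_left nhdsWithin_le_nhds)
    (eventually_nhdsWithin_of_forall fun s (hs : s ∈ Iio t) => ?_)
  exact ENNReal.toReal_mono (by finiteness) (measure_mono fun x (hx : f x ≤ s) => hx.trans_lt hs)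

theorem makarov_upper_bound_general
    {Ω : Type*} [MeasurableSpace Ω] (P : Measure Ω) [IsProbabilityMeasure P]
    (Y1 Y0 : Ω → ℝ) (hY0 : Measurable Y0) :
    (∀ t : ℝ,
      (P {ω | Y1 ω - Y0 ω ≤ 0}).toReal
        ≤ 1 + (P {ω | Y1 ω ≤ t}).toReal - (P {ω | Y0 ω < t}).toReal) ∧
    ((Continuous fun t : ℝ => (P {ω | Y0 ω ≤ t}).toReal) →
      (P {ω | Y1 ω - Y0 ω ≤ 0}).toReal
        ≤ 1 + ⨅ t : ℝ, ((P {ω | Y1 ω ≤ t}).toReal - (P {ω | Y0 ω ≤ t}).toReal)) := by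
  have pointwise (t : ℝ) : (P {ω | Y1 ω - Y0 ω ≤ 0}).toReal
      ≤ 1 + (P {ω | Y1 ω ≤ t}).toReal - (P {ω | Y0 ω < t}).toReal := by
    have := toReal_measure_add_le_one_add (μ := P) (s := {ω | Y1 ω - Y0 ω ≤ 0})
      (t := {ω | Y0 ω < t}) (u := {ω | Y1 ω ≤ t}) (hY0 measurableSet_Iio).nullMeasurableSet
      fun ω ⟨(hω : Y1 ω - Y0 ω ≤ 0), (hlt : Y0 ω < t)⟩ => (by linarith : Y1 ω ≤ t)
    linarith
  refine ⟨pointwise, fun hcont => ?_⟩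
  have hinf := le_ciInf fun t => show (P {ω | Y1 ω - Y0 ω ≤ 0}).toReal - 1
      ≤ (P {ω | Y1 ω ≤ t}).toReal - (P {ω | Y0 ω ≤ t}).toReal by
    linarith [pointwise t, toReal_measure_le_le_toReal_measure_lt_of_continuous hcont t]
  linarith

theorem makarov_upper_bound
    {Ω : Type*} [MeasurableSpace Ω] (P : Measure Ω) [IsProbabilityMeasure P]
    (Y1 Y0 : Ω → ℝ) (hY1 : Measurable Y1) (hY0 : Measurable Y0) :
    (∀ t : ℝ,
      (P {ω | Y1 ω - Y0 ω ≤ 0}).toReal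
        ≤ 1 + (P {ω | Y1 ω ≤ t}).toReal - (P {ω | Y0 ω < t}).toReal) ∧
    ((Continuous fun t : ℝ => (P {ω | Y0 ω ≤ t}).toReal) →
      (P {ω | Y1 ω - Y0 ω ≤ 0}).toReal
        ≤ 1 + ⨅ t : ℝ, ((P {ω | Y1 ω ≤ t}).toReal - (P {ω | Y0 ω ≤ t}).toReal)) :=
  makarov_upper_bound_general P Y1 Y0 hY0
end

section
/- Covariate-adjusted Makarov bounds are valid: for any measurable s : 𝒳 → ℝ, defining Δ(t,s) = P(Y1 - s(X) ≤ t) - P(Y0 - s(X) ≤ t), it holds that sup_t Δ(t,s) ≤ P(Y1 - Y0 ≤ 0), and if the distribution of Y0 - s(X) is continuous then P(Y1 - Y0 ≤ 0) ≤ 1 + inf_t Δ(t,s). -/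
open MeasureTheory

theorem covariate_adjusted_makarov_bounds_valid
    {Ω 𝓧 : Type*} [MeasurableSpace Ω] [MeasurableSpace 𝓧]
    (P : Measure Ω) [IsProbabilityMeasure P]
    (Y1 Y0 : Ω → ℝ) (X : Ω → 𝓧) (s : 𝓧 → ℝ)
    (hY1 : Measurable Y1) (hY0 : Measurable Y0)
    (hX : Measurable X) (hs : Measurable s)
    (Δ : ℝ → ℝ)
    (hΔ : ∀ t, Δ t = (P {ω | Y1 ω - s (X ω) ≤ t}).toReal
                    - (P {ω | Y0 ω - s (X ω) ≤ t}).toReal) :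
    (⨆ t : ℝ, Δ t) ≤ (P {ω | Y1 ω - Y0 ω ≤ 0}).toReal ∧
    ((Continuous fun t : ℝ => (P {ω | Y0 ω - s (X ω) ≤ t}).toReal) →
      (P {ω | Y1 ω - Y0 ω ≤ 0}).toReal ≤ 1 + ⨅ t : ℝ, Δ t) := by
  have hBmeas : ∀ t : ℝ, MeasurableSet {ω | Y0 ω - s (X ω) ≤ t} := fun t =>
    measurableSet_le ((hY0.sub (hs.comp hX))) measurable_const
  have fin : ∀ S : Set Ω, P S ≠ ⊤ := fun S => measure_ne_top _ _
  constructor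
  · apply ciSup_le
    intro t
    rw [hΔ]
    have hsub : {ω | Y1 ω - s (X ω) ≤ t} ⊆
        {ω | Y0 ω - s (X ω) ≤ t} ∪ {ω | Y1 ω - Y0 ω ≤ 0} := by
      intro ω hω
      by_cases h : Y1 ω - Y0 ω ≤ 0
      · exact Or.inr h
      · left; simp only [Set.mem_setOf_eq] at *; linarith
    have h1 : P {ω | Y1 ω - s (X ω) ≤ t}
        ≤ P {ω | Y0 ω - s (X ω) ≤ t} + P {ω | Y1 ω - Y0 ω ≤ 0} :=
      (measure_mono hsub).trans (measure_union_le _ _)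
    have h2 : (P {ω | Y1 ω - s (X ω) ≤ t}).toReal
        ≤ (P {ω | Y0 ω - s (X ω) ≤ t}).toReal + (P {ω | Y1 ω - Y0 ω ≤ 0}).toReal := by
      rw [← ENNReal.toReal_add (fin _) (fin _)]
      exact ENNReal.toReal_le_toReal (fin _) (ENNReal.add_ne_top.2 ⟨fin _, fin _⟩) |>.2 h1
    linarith
  · intro _
    rw [← sub_le_iff_le_add']
    apply le_ciInf
    intro t
    rw [hΔ]
    have key := measure_union_add_inter (μ := P) {ω | Y1 ω - Y0 ω ≤ 0} (hBmeas t)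
    have hcap : {ω | Y1 ω - Y0 ω ≤ 0} ∩ {ω | Y0 ω - s (X ω) ≤ t}
        ⊆ {ω | Y1 ω - s (X ω) ≤ t} := by
      rintro ω ⟨h1, h2⟩
      simp only [Set.mem_setOf_eq] at *; linarith
    have hle : P {ω | Y1 ω - Y0 ω ≤ 0} + P {ω | Y0 ω - s (X ω) ≤ t}
        ≤ 1 + P {ω | Y1 ω - s (X ω) ≤ t} := by
      rw [← key]
      exact add_le_add (prob_le_one) (measure_mono hcap)
    have h2 : (P {ω | Y1 ω - Y0 ω ≤ 0}).toReal + (P {ω | Y0 ω - s (X ω) ≤ t}).toReal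
        ≤ 1 + (P {ω | Y1 ω - s (X ω) ≤ t}).toReal := by
      rw [← ENNReal.toReal_add (fin _) (fin _)]
      have := ENNReal.toReal_le_toReal (ENNReal.add_ne_top.2 ⟨fin _, fin _⟩)
        (ENNReal.add_ne_top.2 ⟨ENNReal.one_ne_top, fin _⟩) |>.2 hle
      rwa [ENNReal.toReal_add ENNReal.one_ne_top (fin _), ENNReal.toReal_one] at this
    linarith
end

section
/- The conditional sharp lower bound dominates the covariate-adjusted bound for any s: for any measurable s : 𝒳 → ℝ and any t ∈ ℝ, E[sup_u (F1(u|X) - F0(u|X))] ≥ P(Y1 - s(X) ≤ t) - P(Y0 - s(X) ≤ t). -/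
open MeasureTheory

theorem conditional_sharp_lower_bound_dominates
    {Ω 𝓧 : Type*} [MeasurableSpace Ω] [MeasurableSpace 𝓧]
    (P : Measure Ω) [IsProbabilityMeasure P]
    (Y1 Y0 : Ω → ℝ) (X : Ω → 𝓧)
    (hY1 : Measurable Y1) (hY0 : Measurable Y0) (hX : Measurable X)
    (Fc1 Fc0 : 𝓧 → ℝ → ℝ)
    (hcdf1 : ∀ x t, Fc1 x t ∈ Set.Icc (0:ℝ) 1)
    (hcdf0 : ∀ x t, Fc0 x t ∈ Set.Icc (0:ℝ) 1)
    (hlink1 : ∀ g : 𝓧 → ℝ, Measurable g →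
      Integrable (fun x => Fc1 x (g x)) (P.map X) ∧
      (P {ω | Y1 ω ≤ g (X ω)}).toReal = ∫ x, Fc1 x (g x) ∂(P.map X))
    (hlink0 : ∀ g : 𝓧 → ℝ, Measurable g →
      Integrable (fun x => Fc0 x (g x)) (P.map X) ∧
      (P {ω | Y0 ω ≤ g (X ω)}).toReal = ∫ x, Fc0 x (g x) ∂(P.map X))
    (hsupInt : Integrable (fun x => ⨆ u : ℝ, (Fc1 x u - Fc0 x u)) (P.map X))
    (s : 𝓧 → ℝ) (hs : Measurable s) (t : ℝ) :
    (P {ω | Y1 ω - s (X ω) ≤ t}).toReal - (P {ω | Y0 ω - s (X ω) ≤ t}).toReal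
      ≤ ∫ x, (⨆ u : ℝ, (Fc1 x u - Fc0 x u)) ∂(P.map X) := by
  set g : 𝓧 → ℝ := fun x => s x + t with hg
  have hgm : Measurable g := hs.add_const t
  have h1 := hlink1 g hgm
  have h0 := hlink0 g hgm
  have hset1 : {ω | Y1 ω - s (X ω) ≤ t} = {ω | Y1 ω ≤ g (X ω)} := by
    ext ω; simp [hg, sub_le_iff_le_add, add_comm]
  have hset0 : {ω | Y0 ω - s (X ω) ≤ t} = {ω | Y0 ω ≤ g (X ω)} := by
    ext ω; simp [hg, sub_le_iff_le_add, add_comm]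
  rw [hset1, hset0, h1.2, h0.2, ← integral_sub h1.1 h0.1]
  apply integral_mono (h1.1.sub h0.1) hsupInt
  intro x
  have hbdd : BddAbove (Set.range fun u => Fc1 x u - Fc0 x u) := by
    refine ⟨1, ?_⟩
    rintro _ ⟨u, rfl⟩
    dsimp only
    linarith [(hcdf1 x u).2, (hcdf0 x u).1]
  exact le_ciSup hbdd (g x)
end

section
/- Sandwich property of induced bounds: for any measurable s, the sharp bounds satisfy θ*_L = E[sup_u (F1(u|X) - F0(u|X))] ≥ sup_t Δ(t,s) and θ*_U = 1 + E[inf_u (F1(u|X) - F0(u|X))] ≤ 1 + inf_t Δ(t,s), so bounds induced by any s are weakly wider than the sharp bounds. -/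
open MeasureTheory

/-- Bounds induced by any covariate-adjustment term `s` are weakly wider than the
sharp Fan–Park bounds `θ*_L = E[sup_u (F1(u|X) - F0(u|X))]` and
`θ*_U = 1 + E[inf_u (F1(u|X) - F0(u|X))]`. -/
theorem induced_bounds_weakly_wider_than_sharp
    {Ω 𝓧 : Type*} [MeasurableSpace Ω] [MeasurableSpace 𝓧]
    (P : Measure Ω) [IsProbabilityMeasure P]
    (Y1 Y0 : Ω → ℝ) (X : Ω → 𝓧)
    (hY1 : Measurable Y1) (hY0 : Measurable Y0) (hX : Measurable X)
    (Fc1 Fc0 : 𝓧 → ℝ → ℝ)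
    (hcdf1 : ∀ x t, Fc1 x t ∈ Set.Icc (0:ℝ) 1)
    (hcdf0 : ∀ x t, Fc0 x t ∈ Set.Icc (0:ℝ) 1)
    (hlink1 : ∀ g : 𝓧 → ℝ, Measurable g →
      Integrable (fun x => Fc1 x (g x)) (P.map X) ∧
      (P {ω | Y1 ω ≤ g (X ω)}).toReal = ∫ x, Fc1 x (g x) ∂(P.map X))
    (hlink0 : ∀ g : 𝓧 → ℝ, Measurable g →
      Integrable (fun x => Fc0 x (g x)) (P.map X) ∧
      (P {ω | Y0 ω ≤ g (X ω)}).toReal = ∫ x, Fc0 x (g x) ∂(P.map X))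
    (hsupInt : Integrable (fun x => ⨆ u : ℝ, (Fc1 x u - Fc0 x u)) (P.map X))
    (hinfInt : Integrable (fun x => ⨅ u : ℝ, (Fc1 x u - Fc0 x u)) (P.map X))
    (s : 𝓧 → ℝ) (hs : Measurable s)
    (Δ : ℝ → ℝ)
    (hΔ : ∀ t, Δ t = (P {ω | Y1 ω - s (X ω) ≤ t}).toReal
                    - (P {ω | Y0 ω - s (X ω) ≤ t}).toReal) :
    (⨆ t : ℝ, Δ t) ≤ ∫ x, (⨆ u : ℝ, (Fc1 x u - Fc0 x u)) ∂(P.map X) ∧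
    1 + ∫ x, (⨅ u : ℝ, (Fc1 x u - Fc0 x u)) ∂(P.map X) ≤ 1 + ⨅ t : ℝ, Δ t := by
  have key : ∀ t : ℝ,
      Δ t = ∫ x, (Fc1 x (t + s x) - Fc0 x (t + s x)) ∂(P.map X) := by
    intro t
    have hg : Measurable (fun x => t + s x) := by measurability
    obtain ⟨hi1, he1⟩ := hlink1 (fun x => t + s x) hg
    obtain ⟨hi0, he0⟩ := hlink0 (fun x => t + s x) hg
    have hs1 : {ω | Y1 ω - s (X ω) ≤ t} = {ω | Y1 ω ≤ t + s (X ω)} := by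
      ext ω; simp [sub_le_iff_le_add, add_comm]
    have hs0 : {ω | Y0 ω - s (X ω) ≤ t} = {ω | Y0 ω ≤ t + s (X ω)} := by
      ext ω; simp [sub_le_iff_le_add, add_comm]
    rw [hΔ, hs1, hs0, he1, he0, ← integral_sub hi1 hi0]
  have hbddA : ∀ x, BddAbove (Set.range fun u => Fc1 x u - Fc0 x u) := by
    intro x
    refine ⟨1, ?_⟩
    rintro _ ⟨u, rfl⟩
    have h1 := hcdf1 x u; have h0 := hcdf0 x u
    simp only [Set.mem_Icc] at h1 h0
    dsimp; linarith [h1.2, h0.1]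
  have hbddB : ∀ x, BddBelow (Set.range fun u => Fc1 x u - Fc0 x u) := by
    intro x
    refine ⟨-1, ?_⟩
    rintro _ ⟨u, rfl⟩
    have h1 := hcdf1 x u; have h0 := hcdf0 x u
    simp only [Set.mem_Icc] at h1 h0
    dsimp; linarith [h1.1, h0.2]
  have hDup : ∀ t, Δ t ≤ ∫ x, (⨆ u : ℝ, (Fc1 x u - Fc0 x u)) ∂(P.map X) := by
    intro t
    rw [key t]
    have hg : Measurable (fun x => t + s x) := by measurability
    obtain ⟨hi1, _⟩ := hlink1 _ hg
    obtain ⟨hi0, _⟩ := hlink0 _ hg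
    exact integral_mono (hi1.sub hi0) hsupInt (fun x => le_ciSup (hbddA x) (t + s x))
  have hDlo : ∀ t, ∫ x, (⨅ u : ℝ, (Fc1 x u - Fc0 x u)) ∂(P.map X) ≤ Δ t := by
    intro t
    rw [key t]
    have hg : Measurable (fun x => t + s x) := by measurability
    obtain ⟨hi1, _⟩ := hlink1 _ hg
    obtain ⟨hi0, _⟩ := hlink0 _ hg
    exact integral_mono hinfInt (hi1.sub hi0) (fun x => ciInf_le (hbddB x) (t + s x))
  exact ⟨ciSup_le hDup, add_le_add_right (le_ciInf hDlo) 1⟩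
end

section
/- The sharp bounds contain the parameter: θ*_L ≤ P(Y1 - Y0 ≤ 0) ≤ θ*_U, where θ*_L = E[sup_t (F1(t|X) - F0(t|X))] and θ*_U = 1 + E[inf_t (F1(t|X) - F0(t|X))], assuming Y0 has a continuous conditional distribution given X. -/
open MeasureTheory ProbabilityTheory

/-- The sharp Fan–Park bounds contain the distributional treatment effect.
`κ` is a regular conditional distribution of `(Y1, Y0)` given `X`, the conditional
distribution of `Y0` given `X` is atomless a.e., and the conditional sup/inf
functions are integrable. -/
theorem sharp_bounds_contain_dte
    {Ω 𝓧 : Type*} [MeasurableSpace Ω] [MeasurableSpace 𝓧]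
    (P : Measure Ω) [IsProbabilityMeasure P]
    (Y1 Y0 : Ω → ℝ) (X : Ω → 𝓧)
    (hY1 : Measurable Y1) (hY0 : Measurable Y0) (hX : Measurable X)
    (κ : Kernel 𝓧 (ℝ × ℝ)) [IsMarkovKernel κ]
    (hdisint : P.map (fun ω => (X ω, (Y1 ω, Y0 ω))) = (P.map X) ⊗ₘ κ)
    (hcont : ∀ᵐ x ∂(P.map X), ∀ t : ℝ, κ x {p : ℝ × ℝ | p.2 = t} = 0)
    (hsupInt : Integrable (fun x =>
      ⨆ t : ℝ, ((κ x {p : ℝ × ℝ | p.1 ≤ t}).toReal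
        - (κ x {p : ℝ × ℝ | p.2 ≤ t}).toReal)) (P.map X))
    (hinfInt : Integrable (fun x =>
      ⨅ t : ℝ, ((κ x {p : ℝ × ℝ | p.1 ≤ t}).toReal
        - (κ x {p : ℝ × ℝ | p.2 ≤ t}).toReal)) (P.map X)) :
    (∫ x, (⨆ t : ℝ, ((κ x {p : ℝ × ℝ | p.1 ≤ t}).toReal
        - (κ x {p : ℝ × ℝ | p.2 ≤ t}).toReal)) ∂(P.map X))
      ≤ (P {ω | Y1 ω - Y0 ω ≤ 0}).toReal ∧
    (P {ω | Y1 ω - Y0 ω ≤ 0}).toReal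
      ≤ 1 + ∫ x, (⨅ t : ℝ, ((κ x {p : ℝ × ℝ | p.1 ≤ t}).toReal
        - (κ x {p : ℝ × ℝ | p.2 ≤ t}).toReal)) ∂(P.map X) := by
  set μ := P.map X with hμ
  have : IsProbabilityMeasure μ := Measure.isProbabilityMeasure_map hX.aemeasurable
  have hf : Measurable (fun ω => (X ω, (Y1 ω, Y0 ω))) := hX.prodMk (hY1.prodMk hY0)
  have hS : MeasurableSet {p : ℝ × ℝ | p.1 ≤ p.2} :=
    measurableSet_le measurable_fst measurable_snd
  have hSt : ∀ t : ℝ, MeasurableSet {p : ℝ × ℝ | p.1 ≤ t} := fun t =>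
    measurableSet_le measurable_fst measurable_const
  have hSt' : ∀ t : ℝ, MeasurableSet {p : ℝ × ℝ | p.2 ≤ t} := fun t =>
    measurableSet_le measurable_snd measurable_const
  have hfinS : ∀ x, κ x {p : ℝ × ℝ | p.1 ≤ p.2} ≠ ⊤ := fun x => measure_ne_top _ _
  -- key identity
  have key : P {ω | Y1 ω - Y0 ω ≤ 0} = ∫⁻ x, κ x {p : ℝ × ℝ | p.1 ≤ p.2} ∂μ := by
    have hq : MeasurableSet {q : 𝓧 × (ℝ × ℝ) | q.2.1 ≤ q.2.2} :=
      measurableSet_le (measurable_fst.comp measurable_snd) (measurable_snd.comp measurable_snd)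
    have hset : {ω | Y1 ω - Y0 ω ≤ 0}
        = (fun ω => (X ω, (Y1 ω, Y0 ω))) ⁻¹' {q : 𝓧 × (ℝ × ℝ) | q.2.1 ≤ q.2.2} := by
      ext ω; simp [sub_nonpos]
    rw [hset, ← Measure.map_apply hf hq, hdisint, Measure.compProd_apply hq]
    rfl
  have keyR : (P {ω | Y1 ω - Y0 ω ≤ 0}).toReal
      = ∫ x, (κ x {p : ℝ × ℝ | p.1 ≤ p.2}).toReal ∂μ := by
    rw [key, integral_toReal ((κ.measurable_coe hS).aemeasurable)
      (Filter.Eventually.of_forall fun x => lt_top_iff_ne_top.2 (hfinS x))]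
  have hIntc : Integrable (fun x => (κ x {p : ℝ × ℝ | p.1 ≤ p.2}).toReal) μ := by
    refine (integrable_const (1 : ℝ)).mono'
      ((κ.measurable_coe hS).ennreal_toReal.aestronglyMeasurable) ?_
    refine Filter.Eventually.of_forall fun x => ?_
    rw [Real.norm_eq_abs, abs_of_nonneg ENNReal.toReal_nonneg]
    exact ENNReal.toReal_le_of_le_ofReal zero_le_one (by simpa using prob_le_one)
  -- pointwise bounds
  have hsup : ∀ x, (⨆ t : ℝ, ((κ x {p : ℝ × ℝ | p.1 ≤ t}).toReal
        - (κ x {p : ℝ × ℝ | p.2 ≤ t}).toReal)) ≤ (κ x {p : ℝ × ℝ | p.1 ≤ p.2}).toReal := by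
    intro x
    refine ciSup_le fun t => ?_
    rw [sub_le_iff_le_add]
    have h1 : κ x {p : ℝ × ℝ | p.1 ≤ t}
        ≤ κ x {p : ℝ × ℝ | p.1 ≤ p.2} + κ x {p : ℝ × ℝ | p.2 ≤ t} := by
      refine le_trans (measure_mono ?_) (measure_union_le _ _)
      intro p hp
      rcases le_or_gt p.1 p.2 with h | h
      · exact Or.inl h
      · exact Or.inr (le_trans h.le hp)
    calc (κ x {p : ℝ × ℝ | p.1 ≤ t}).toReal
        ≤ (κ x {p : ℝ × ℝ | p.1 ≤ p.2} + κ x {p : ℝ × ℝ | p.2 ≤ t}).toReal :=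
          ENNReal.toReal_mono (ENNReal.add_ne_top.2 ⟨measure_ne_top _ _, measure_ne_top _ _⟩) h1
      _ = _ := ENNReal.toReal_add (measure_ne_top _ _) (measure_ne_top _ _)
  have hinf : ∀ x, (κ x {p : ℝ × ℝ | p.1 ≤ p.2}).toReal
      ≤ 1 + ⨅ t : ℝ, ((κ x {p : ℝ × ℝ | p.1 ≤ t}).toReal
        - (κ x {p : ℝ × ℝ | p.2 ≤ t}).toReal) := by
    intro x
    have hle : (κ x {p : ℝ × ℝ | p.1 ≤ p.2}).toReal - 1
        ≤ ⨅ t : ℝ, ((κ x {p : ℝ × ℝ | p.1 ≤ t}).toReal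
          - (κ x {p : ℝ × ℝ | p.2 ≤ t}).toReal) := by
      refine le_ciInf fun t => ?_
      rw [sub_le_iff_le_add, sub_add_eq_add_sub, le_sub_iff_add_le]
      -- goal: c + b t ≤ 1 + a t  (as reals, in some order)
      have h2 : κ x {p : ℝ × ℝ | p.1 ≤ p.2} + κ x {p : ℝ × ℝ | p.2 ≤ t}
          ≤ 1 + κ x {p : ℝ × ℝ | p.1 ≤ t} := by
        rw [← measure_union_add_inter _ (hSt' t)]
        refine add_le_add prob_le_one (measure_mono ?_)
        intro p hp
        simp only [Set.mem_inter_iff, Set.mem_setOf_eq] at hp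
        exact le_trans hp.1 hp.2
      calc (κ x {p : ℝ × ℝ | p.1 ≤ p.2}).toReal + (κ x {p : ℝ × ℝ | p.2 ≤ t}).toReal
          = (κ x {p : ℝ × ℝ | p.1 ≤ p.2} + κ x {p : ℝ × ℝ | p.2 ≤ t}).toReal :=
            (ENNReal.toReal_add (measure_ne_top _ _) (measure_ne_top _ _)).symm
        _ ≤ (1 + κ x {p : ℝ × ℝ | p.1 ≤ t}).toReal :=
            ENNReal.toReal_mono (ENNReal.add_ne_top.2 ⟨ENNReal.one_ne_top, measure_ne_top _ _⟩) h2
        _ = 1 + (κ x {p : ℝ × ℝ | p.1 ≤ t}).toReal := by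
            rw [ENNReal.toReal_add ENNReal.one_ne_top (measure_ne_top _ _), ENNReal.toReal_one]
        _ = (κ x {p : ℝ × ℝ | p.1 ≤ t}).toReal + 1 := add_comm _ _
    linarith
  constructor
  · rw [keyR]
    exact integral_mono hsupInt hIntc fun x => hsup x
  · rw [keyR]
    have := integral_mono hIntc ((integrable_const (1:ℝ)).add hinfInt) hinf
    simpa [integral_add (integrable_const (1 : ℝ)) hinfInt] using this
end
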